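/- arXiv:2301.03159 — 2 statements merged into one kernel-verified Lean document; each statement's English description precedes it below -/
import Mathlib

section
/- For every bounded linear operator A on a complex Hilbert space, (1/4)·w(|A| + i|A*|)² + (1/8)·‖|A|² + |A*|²‖ + (1/4)·w(|A||A*|) ≤ (1/2)·‖|A|² + |A*|²‖; i.e., the bound of the refined numerical radius inequality does not exceed Kittaneh's bound (1/2)‖A*A + AA*‖. -/
open scoped InnerProductSpace

variable {H : Type*} [NormedAddCommGroup H] [InnerProductSpace ℂ H] [CompleteSpace H]

/-- The numerical radius of a bounded linear operator. -/
noncomputable def numRad (A : H →L[ℂ] H) : ℝ :=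
  sSup {r : ℝ | ∃ x : H, ‖x‖ = 1 ∧ r = ‖⟪A x, x⟫_ℂ‖}

/-- The absolute value `|A| = (A*A)^(1/2)` of a bounded linear operator. -/
noncomputable def oabs (A : H →L[ℂ] H) : H →L[ℂ] H :=
  CFC.sqrt (ContinuousLinearMap.adjoint A * A)

/-- The spectral radius (as a real number). -/
noncomputable def specRad (A : H →L[ℂ] H) : ℝ := (spectralRadius ℂ A).toReal

/-! Write `P = |A|`, `Q = |A*|` and `M = ‖P² + Q²‖`. For a unit vector `x`,
`‖Px‖² + ‖Qx‖² = Re ⟪(P² + Q²)x, x⟫ ≤ M`. Since `⟪Px, x⟫` and `⟪Qx, x⟫` are real,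
`|⟪(P + iQ)x, x⟫|² = ⟪Px, x⟫² + ⟪Qx, x⟫² ≤ ‖Px‖² + ‖Qx‖² ≤ M`, and
`|⟪PQx, x⟫| = |⟪Qx, Px⟫| ≤ ‖Px‖‖Qx‖ ≤ M / 2`. So `w(P + iQ)² ≤ M` and `w(PQ) ≤ M / 2`,
and the left-hand side is at most `M/4 + M/8 + M/8 = M/2`. -/

open ContinuousLinearMap

section NumRad

variable {E : Type*} [NormedAddCommGroup E] [InnerProductSpace ℂ E]

lemma numRad_nonneg (A : E →L[ℂ] E) : 0 ≤ numRad A :=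
  Real.sSup_nonneg (by rintro r ⟨x, -, rfl⟩; exact norm_nonneg _)

lemma numRad_le_of_forall {A : E →L[ℂ] E} {c : ℝ} (hc : 0 ≤ c)
    (h : ∀ x : E, ‖x‖ = 1 → ‖⟪A x, x⟫_ℂ‖ ≤ c) : numRad A ≤ c :=
  Real.sSup_le (by rintro r ⟨x, hx, rfl⟩; exact h x hx) hc

end NumRad

lemma oabs_isSelfAdjoint (A : H →L[ℂ] H) : IsSelfAdjoint (oabs A) :=
  IsSelfAdjoint.of_nonneg (CFC.sqrt_nonneg _)

section SelfAdjoint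

variable {P Q : H →L[ℂ] H}

lemma IsSelfAdjoint.norm_apply_sq_add_norm_apply_sq_le (hP : IsSelfAdjoint P)
    (hQ : IsSelfAdjoint Q) (x : H) :
    ‖P x‖ ^ 2 + ‖Q x‖ ^ 2 ≤ ‖P ^ 2 + Q ^ 2‖ * ‖x‖ ^ 2 := by
  have hre : RCLike.re ⟪(P ^ 2 + Q ^ 2) x, x⟫_ℂ = ‖P x‖ ^ 2 + ‖Q x‖ ^ 2 := by
    rw [add_apply, pow_two, pow_two, mul_apply_eq_comp, mul_apply_eq_comp, inner_add_left,
      hP.isSymmetric.apply_clm, hQ.isSymmetric.apply_clm, map_add,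
      inner_self_eq_norm_sq, inner_self_eq_norm_sq]
  calc ‖P x‖ ^ 2 + ‖Q x‖ ^ 2 = RCLike.re ⟪(P ^ 2 + Q ^ 2) x, x⟫_ℂ := hre.symm
    _ ≤ ‖(P ^ 2 + Q ^ 2) x‖ * ‖x‖ := re_inner_le_norm _ _
    _ ≤ ‖P ^ 2 + Q ^ 2‖ * ‖x‖ * ‖x‖ := by gcongr; exact le_opNorm _ _
    _ = ‖P ^ 2 + Q ^ 2‖ * ‖x‖ ^ 2 := by ring

lemma IsSelfAdjoint.norm_inner_add_I_smul_apply_sq (hP : IsSelfAdjoint P)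
    (hQ : IsSelfAdjoint Q) (x : H) :
    ‖⟪(P + Complex.I • Q) x, x⟫_ℂ‖ ^ 2 = ‖⟪P x, x⟫_ℂ‖ ^ 2 + ‖⟪Q x, x⟫_ℂ‖ ^ 2 := by
  have hPx : ⟪P x, x⟫_ℂ = (⟪P x, x⟫_ℂ).re := (hP.isSymmetric.coe_re_inner_apply_self x).symm
  have hQx : ⟪Q x, x⟫_ℂ = (⟪Q x, x⟫_ℂ).re := (hQ.isSymmetric.coe_re_inner_apply_self x).symm
  set a := (⟪P x, x⟫_ℂ).re
  set b := (⟪Q x, x⟫_ℂ).re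
  have hab : (a : ℂ) + -Complex.I * b = a + (-b : ℝ) * Complex.I := by push_cast; ring
  rw [add_apply, smul_apply, inner_add_left, inner_smul_left, Complex.conj_I, hPx, hQx, hab,
    Complex.sq_norm, Complex.normSq_add_mul_I, Complex.norm_real, Complex.norm_real,
    Real.norm_eq_abs, Real.norm_eq_abs, sq_abs, sq_abs, neg_sq]

lemma IsSelfAdjoint.norm_inner_mul_apply_le (hP : IsSelfAdjoint P) (x : H) :
    ‖⟪(P * Q) x, x⟫_ℂ‖ ≤ ‖Q x‖ * ‖P x‖ := by
  rw [mul_apply_eq_comp, hP.isSymmetric.apply_clm]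
  exact norm_inner_le_norm _ _

lemma IsSelfAdjoint.numRad_add_I_smul_sq_le (hP : IsSelfAdjoint P) (hQ : IsSelfAdjoint Q) :
    numRad (P + Complex.I • Q) ^ 2 ≤ ‖P ^ 2 + Q ^ 2‖ := by
  rw [← Real.le_sqrt (numRad_nonneg _) (norm_nonneg _)]
  refine numRad_le_of_forall (Real.sqrt_nonneg _) fun x hx => ?_
  rw [Real.le_sqrt (norm_nonneg _) (norm_nonneg _), hP.norm_inner_add_I_smul_apply_sq hQ]
  calc ‖⟪P x, x⟫_ℂ‖ ^ 2 + ‖⟪Q x, x⟫_ℂ‖ ^ 2 ≤ ‖P x‖ ^ 2 + ‖Q x‖ ^ 2 := by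
        gcongr <;> simpa [hx] using norm_inner_le_norm _ x
    _ ≤ ‖P ^ 2 + Q ^ 2‖ := by simpa [hx] using hP.norm_apply_sq_add_norm_apply_sq_le hQ x

lemma IsSelfAdjoint.numRad_mul_le (hP : IsSelfAdjoint P) (hQ : IsSelfAdjoint Q) :
    numRad (P * Q) ≤ ‖P ^ 2 + Q ^ 2‖ / 2 := by
  refine numRad_le_of_forall (by positivity) fun x hx => ?_
  calc ‖⟪(P * Q) x, x⟫_ℂ‖ ≤ ‖Q x‖ * ‖P x‖ := hP.norm_inner_mul_apply_le x
    _ ≤ (‖P x‖ ^ 2 + ‖Q x‖ ^ 2) / 2 := by linarith [two_mul_le_add_sq ‖P x‖ ‖Q x‖]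
    _ ≤ ‖P ^ 2 + Q ^ 2‖ / 2 := by
        gcongr; simpa [hx] using hP.norm_apply_sq_add_norm_apply_sq_le hQ x

end SelfAdjoint

theorem stmt1 (A : H →L[ℂ] H) :
    (1 / 4) * numRad (oabs A + Complex.I • oabs (ContinuousLinearMap.adjoint A)) ^ 2
        + (1 / 8) * ‖oabs A ^ 2 + oabs (ContinuousLinearMap.adjoint A) ^ 2‖
        + (1 / 4) * numRad (oabs A * oabs (ContinuousLinearMap.adjoint A))
      ≤ (1 / 2) * ‖oabs A ^ 2 + oabs (ContinuousLinearMap.adjoint A) ^ 2‖ := by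
  have hP := oabs_isSelfAdjoint A
  have hQ := oabs_isSelfAdjoint (ContinuousLinearMap.adjoint A)
  have hsum := hP.numRad_add_I_smul_sq_le hQ
  have hprod := hP.numRad_mul_le hQ
  linarith
end

section
/- Let X, Y be bounded linear operators on a complex Hilbert space, let 0 ≤ α ≤ 1 and 0 ≤ β ≤ 1, and let x be a unit vector. Then |⟨Xx,x⟩⟨Yx,x⟩| ≤ (1/4)·‖α|X|² + (1−α)|X*|² + β|Y|² + (1−β)|Y*|²‖ + (1/8)·‖|X|² + |Y*|²‖ + (1/4)·w(YX). -/
open scoped InnerProductSpace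

variable {H : Type*} [NormedAddCommGroup H] [InnerProductSpace ℂ H] [CompleteSpace H]

/-!
With `a = ‖⟪X x, x⟫‖` and `b = ‖⟪Y x, x⟫‖` we have `a ≤ ‖X x‖`, `a ≤ ‖X* x‖` (likewise for `b`) and
`re ⟪|T|² x, x⟫ = ‖T x‖²`, so `ab ≤ (a² + b²) / 2` is at most half the first norm. Buzano's inequality
for `⟪X x, x⟫ ⟪x, Y* x⟫` gives `ab ≤ (‖X x‖ ‖Y* x‖ + ‖⟪Y X x, x⟫‖) / 2`, which by AM-GM is at most
`‖|X|² + |Y*|²‖ / 4 + w(Y X) / 2`. The theorem is the average of the two bounds.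
-/

open RCLike ContinuousLinearMap

section InnerProductSpace

variable {𝕜 E : Type*} [RCLike 𝕜] [NormedAddCommGroup E] [InnerProductSpace 𝕜 E]

/-- Buzano's inequality. The reflection `w = 2 ⟪e, u⟫ e - u` of `u` in the line `𝕜 ∙ e` has
`‖w‖ = ‖u‖` and `⟪w, v⟫ = 2 ⟪u, e⟫ ⟪e, v⟫ - ⟪u, v⟫`. -/
theorem norm_inner_mul_inner_le_of_norm_eq_one {e : E} (he : ‖e‖ = 1) (u v : E) :
    ‖⟪u, e⟫_𝕜 * ⟪e, v⟫_𝕜‖ ≤ (‖u‖ * ‖v‖ + ‖⟪u, v⟫_𝕜‖) / 2 := by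
  set w := (𝕜 ∙ e).reflection u
  have hw : ⟪w, v⟫_𝕜 = 2 * (⟪u, e⟫_𝕜 * ⟪e, v⟫_𝕜) - ⟪u, v⟫_𝕜 := by
    simp only [w, Submodule.reflection_apply, Submodule.starProjection_unit_singleton 𝕜 he,
      two_smul, inner_sub_left, inner_add_left, inner_smul_left, inner_conj_symm]
    ring
  have hnorm : ‖⟪w, v⟫_𝕜‖ ≤ ‖u‖ * ‖v‖ := by
    simpa [w] using norm_inner_le_norm (𝕜 := 𝕜) w v
  have hsum := calc
    2 * ‖⟪u, e⟫_𝕜 * ⟪e, v⟫_𝕜‖ = ‖⟪w, v⟫_𝕜 + ⟪u, v⟫_𝕜‖ := by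
      rw [hw, sub_add_cancel, norm_mul (2 : 𝕜), RCLike.norm_two]
    _ ≤ ‖⟪w, v⟫_𝕜‖ + ‖⟪u, v⟫_𝕜‖ := norm_add_le _ _
  linarith

variable {x : E} (T : E →L[𝕜] E)

theorem norm_inner_apply_self_le_norm_apply (hx : ‖x‖ = 1) : ‖⟪T x, x⟫_𝕜‖ ≤ ‖T x‖ := by
  simpa [hx] using norm_inner_le_norm (𝕜 := 𝕜) (T x) x

theorem norm_inner_apply_self_le_opNorm (hx : ‖x‖ = 1) : ‖⟪T x, x⟫_𝕜‖ ≤ ‖T‖ :=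
  (norm_inner_apply_self_le_norm_apply T hx).trans (by simpa [hx] using T.le_opNorm x)

theorem re_inner_apply_self_le_opNorm (hx : ‖x‖ = 1) : re ⟪T x, x⟫_𝕜 ≤ ‖T‖ :=
  (re_le_norm _).trans (norm_inner_apply_self_le_opNorm T hx)

variable [CompleteSpace E]

theorem norm_inner_apply_self_le_norm_adjoint_apply (hx : ‖x‖ = 1) :
    ‖⟪T x, x⟫_𝕜‖ ≤ ‖adjoint T x‖ := by
  simpa [hx, adjoint_inner_right] using norm_inner_le_norm (𝕜 := 𝕜) x (adjoint T x)

theorem norm_inner_apply_self_sq_le {α : ℝ} (hα₀ : 0 ≤ α) (hα₁ : α ≤ 1) (hx : ‖x‖ = 1) :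
    ‖⟪T x, x⟫_𝕜‖ ^ 2 ≤ α * ‖T x‖ ^ 2 + (1 - α) * ‖adjoint T x‖ ^ 2 := by
  have h₁ := pow_le_pow_left₀ (norm_nonneg _) (norm_inner_apply_self_le_norm_apply T hx) 2
  have h₂ := pow_le_pow_left₀ (norm_nonneg _) (norm_inner_apply_self_le_norm_adjoint_apply T hx) 2
  nlinarith

end InnerProductSpace

theorem norm_inner_le_numRad {E : Type*} [NormedAddCommGroup E] [InnerProductSpace ℂ E]
    (A : E →L[ℂ] E) {x : E} (hx : ‖x‖ = 1) :
    ‖⟪A x, x⟫_ℂ‖ ≤ numRad A := by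
  refine le_csSup ⟨‖A‖, ?_⟩ ⟨x, hx, rfl⟩
  rintro r ⟨y, hy, rfl⟩
  exact norm_inner_apply_self_le_opNorm A hy

theorem oabs_sq (A : H →L[ℂ] H) : oabs A ^ 2 = adjoint A * A :=
  CFC.sq_sqrt _ (by simpa only [star_eq_adjoint] using star_mul_self_nonneg A)

theorem re_inner_oabs_sq_apply_self (A : H →L[ℂ] H) (x : H) :
    re ⟪(oabs A ^ 2) x, x⟫_ℂ = ‖A x‖ ^ 2 := by
  rw [oabs_sq, mul_apply_eq_comp, adjoint_inner_left, inner_self_eq_norm_sq]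

theorem norm_inner_mul_inner_le_half_opNorm (X Y : H →L[ℂ] H) {α β : ℝ}
    (hα₀ : 0 ≤ α) (hα₁ : α ≤ 1) (hβ₀ : 0 ≤ β) (hβ₁ : β ≤ 1) {x : H} (hx : ‖x‖ = 1) :
    ‖⟪X x, x⟫_ℂ * ⟪Y x, x⟫_ℂ‖ ≤
      ‖α • oabs X ^ 2 + (1 - α) • oabs (adjoint X) ^ 2
        + β • oabs Y ^ 2 + (1 - β) • oabs (adjoint Y) ^ 2‖ / 2 := by
  have hX := norm_inner_apply_self_sq_le X hα₀ hα₁ hx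
  have hY := norm_inner_apply_self_sq_le Y hβ₀ hβ₁ hx
  have hM := re_inner_apply_self_le_opNorm
    (α • oabs X ^ 2 + (1 - α) • oabs (adjoint X) ^ 2
      + β • oabs Y ^ 2 + (1 - β) • oabs (adjoint Y) ^ 2) hx
  simp only [add_apply, smul_apply, inner_add_left, inner_smul_left_eq_smul, map_add, smul_re,
    re_inner_oabs_sq_apply_self] at hM
  rw [norm_mul]
  nlinarith [sq_nonneg (‖⟪X x, x⟫_ℂ‖ - ‖⟪Y x, x⟫_ℂ‖)]

theorem norm_inner_mul_inner_le_opNorm_add_numRad (X Y : H →L[ℂ] H) {x : H} (hx : ‖x‖ = 1) :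
    ‖⟪X x, x⟫_ℂ * ⟪Y x, x⟫_ℂ‖ ≤
      ‖oabs X ^ 2 + oabs (adjoint Y) ^ 2‖ / 4 + numRad (Y * X) / 2 := by
  have hBuzano := norm_inner_mul_inner_le_of_norm_eq_one (𝕜 := ℂ) hx (X x) (adjoint Y x)
  rw [adjoint_inner_right, adjoint_inner_right] at hBuzano
  have hNumRad := norm_inner_le_numRad (Y * X) hx
  have hM := re_inner_apply_self_le_opNorm (oabs X ^ 2 + oabs (adjoint Y) ^ 2) hx
  simp only [add_apply, inner_add_left, map_add, re_inner_oabs_sq_apply_self] at hM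
  rw [mul_apply_eq_comp] at hNumRad
  nlinarith [sq_nonneg (‖X x‖ - ‖adjoint Y x‖)]

theorem stmt2 (X Y : H →L[ℂ] H) (α β : ℝ) (hα : 0 ≤ α ∧ α ≤ 1) (hβ : 0 ≤ β ∧ β ≤ 1)
    (x : H) (hx : ‖x‖ = 1) :
    ‖⟪X x, x⟫_ℂ * ⟪Y x, x⟫_ℂ‖ ≤
      (1 / 4) * ‖α • oabs X ^ 2 + (1 - α) • oabs (ContinuousLinearMap.adjoint X) ^ 2
                  + β • oabs Y ^ 2 + (1 - β) • oabs (ContinuousLinearMap.adjoint Y) ^ 2‖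
        + (1 / 8) * ‖oabs X ^ 2 + oabs (ContinuousLinearMap.adjoint Y) ^ 2‖
        + (1 / 4) * numRad (Y * X) := by
  have h₁ := norm_inner_mul_inner_le_half_opNorm X Y hα.1 hα.2 hβ.1 hβ.2 hx
  have h₂ := norm_inner_mul_inner_le_opNorm_add_numRad X Y hx
  linarith
end
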